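/- Let k ≥ 2 and let P : Fin k → ℝ be a probability vector with P i > 0 for all i and ∑ i, P i = 1. Let A(P) be the k×k real symmetric matrix with A(P)_ii = (1/(k−1)) · ∑_{j ≠ i} (P j − P i)/(P i + P j) and A(P)_ij = −2√(P i · P j)/((k−1)(P i + P j)) for i ≠ j. Then A(P) · v(P) = −v(P), where v(P)_i = √(P i); that is, v(P) is an eigenvector of the warm-started fully-connected XY-mixer with eigenvalue −1. -/

import Mathlib

/-!
Write `c = k - 1`. Row `i` of `A · √P` collects `√(P i) / c` times the sum over `l ≠ i` of
`(P l - P i) / (P i + P l)` (from the diagonal) and `-2 P l / (P i + P l)` (from the entry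
`A i l`, since `√(P i P l) √(P l) = √(P i) P l`). Each pair of summands adds up to `-1`, so the
row equals `√(P i) / c · (-c) = -√(P i)`.
-/

open Matrix Finset

variable {ι : Type*} [Fintype ι] [DecidableEq ι]

noncomputable def xyMixer (P : ι → ℝ) : Matrix ι ι ℝ :=
  Matrix.of fun i j =>
    if i = j then
      (1 / ((Fintype.card ι : ℝ) - 1)) * ∑ l ∈ univ.erase i, (P l - P i) / (P i + P l)
    else
      -2 * Real.sqrt (P i * P j) / (((Fintype.card ι : ℝ) - 1) * (P i + P j))

theorem xyMixer_apply_mul_sqrt_of_ne {P : ι → ℝ} (hP : ∀ i, 0 ≤ P i) {i j : ι} (hij : i ≠ j) :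
    xyMixer P i j * Real.sqrt (P j) =
      Real.sqrt (P i) / ((Fintype.card ι : ℝ) - 1) * (-2 * P j / (P i + P j)) := by
  have hsqrt : Real.sqrt (P i * P j) * Real.sqrt (P j) = Real.sqrt (P i) * P j := by
    rw [Real.sqrt_mul (hP i), mul_assoc, Real.mul_self_sqrt (hP j)]
  calc xyMixer P i j * Real.sqrt (P j)
      = -2 * (Real.sqrt (P i * P j) * Real.sqrt (P j)) /
          (((Fintype.card ι : ℝ) - 1) * (P i + P j)) := by
        rw [xyMixer, of_apply, if_neg hij]
        ring
    _ = _ := by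
        rw [hsqrt, ← div_div]
        ring

theorem sub_div_add_neg_two_mul_div_eq_neg_one {a b : ℝ} (hab : a + b ≠ 0) :
    (b - a) / (a + b) + -2 * b / (a + b) = -1 := by
  field_simp
  ring

theorem sum_erase_xyMixer_coeffs {P : ι → ℝ} (hP : ∀ i, 0 < P i) (i : ι) :
    ∑ l ∈ univ.erase i, (P l - P i) / (P i + P l) + ∑ l ∈ univ.erase i, -2 * P l / (P i + P l) =
      -((Fintype.card ι : ℝ) - 1) := by
  have hpair : ∀ l ∈ univ.erase i, (P l - P i) / (P i + P l) + -2 * P l / (P i + P l) = -1 :=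
    fun l _ => sub_div_add_neg_two_mul_div_eq_neg_one (add_pos (hP i) (hP l)).ne'
  rw [← sum_add_distrib, sum_congr rfl hpair, sum_const, card_erase_of_mem (mem_univ i),
    card_univ, nsmul_eq_mul, Nat.cast_sub (Fintype.card_pos_iff.mpr ⟨i⟩)]
  ring

theorem xyMixer_mulVec_sqrt {P : ι → ℝ} (hcard : Fintype.card ι ≠ 1) (hP : ∀ i, 0 < P i) :
    xyMixer P *ᵥ (fun i => Real.sqrt (P i)) = -fun i => Real.sqrt (P i) := by
  funext i
  have hc : (Fintype.card ι : ℝ) - 1 ≠ 0 := sub_ne_zero.mpr (by exact_mod_cast hcard)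
  have hoff : ∀ j ∈ univ.erase i, xyMixer P i j * Real.sqrt (P j) =
      Real.sqrt (P i) / ((Fintype.card ι : ℝ) - 1) * (-2 * P j / (P i + P j)) :=
    fun j hj => xyMixer_apply_mul_sqrt_of_ne (fun l => (hP l).le) (ne_of_mem_erase hj).symm
  simp only [mulVec, dotProduct, Pi.neg_apply]
  rw [← add_sum_erase _ _ (mem_univ i), sum_congr rfl hoff, ← mul_sum, xyMixer, of_apply,
    if_pos rfl]
  calc _ = Real.sqrt (P i) / ((Fintype.card ι : ℝ) - 1) *
        (∑ l ∈ univ.erase i, (P l - P i) / (P i + P l) +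
          ∑ l ∈ univ.erase i, -2 * P l / (P i + P l)) := by ring
    _ = -Real.sqrt (P i) := by
        rw [sum_erase_xyMixer_coeffs hP i]
        field_simp

theorem statement1 (k : ℕ) (hk : 2 ≤ k) (P : Fin k → ℝ)
    (hpos : ∀ i, 0 < P i)
    (A : Matrix (Fin k) (Fin k) ℝ)
    (hA : ∀ i j, A i j =
      if i = j then
        (1 / ((k : ℝ) - 1)) * ∑ l ∈ Finset.univ.erase i, (P l - P i) / (P i + P l)
      else
        -2 * Real.sqrt (P i * P j) / (((k : ℝ) - 1) * (P i + P j)))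
    (v : Fin k → ℝ) (hv : ∀ i, v i = Real.sqrt (P i)) :
    A.mulVec v = -v := by
  have hA' : A = xyMixer P := by
    ext i j
    rw [hA, xyMixer, of_apply, Fintype.card_fin]
  have hv' : v = fun i => Real.sqrt (P i) := funext hv
  subst hA' hv'
  exact xyMixer_mulVec_sqrt (by rw [Fintype.card_fin]; omega) hpos
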